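/- (Positivity of ξ_τ·k₊ in the trapped frequency regime.) Let δ > 0. There exists a constant c > 0, depending only on m and δ, such that every admissible triple (ξ_τ, ξ_φ, Λ) satisfying both (a) (1/2)δ m³ ξ_τ² < Λ² < 2δ⁻¹ m ξ_τ², and (b) NOT ((1/4)δΛ² ≤ −ξ_τ ξ_φ and −ξ_τ ξ_φ ≤ ω_H ξ_φ² + δΛ²), also satisfies ξ_τ k₊ ≥ cΛ² > 0; in particular ξ_τ k₊ ≥ (cδm³/2) ξ_τ² > 0. -/
import Mathlib


open Real Set

noncomputable section

/-- The larger root `r₊ = m + √(m² − a²)` of `Δ(r) = r² − 2mr + a²`. -/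
def kerrRp (m a : ℝ) : ℝ := m + Real.sqrt (m ^ 2 - a ^ 2)

/-- The horizon angular velocity `ω_H = a/(2 m r₊)`. -/
def kerrOmegaH (m a : ℝ) : ℝ := a / (2 * m * kerrRp m a)

set_option maxHeartbeats 1000000 in
/-- Positivity of `ξτ·k₊` in the trapped frequency regime: for `δ > 0` there is `c > 0`,
depending only on `m` and `δ`, such that every admissible triple satisfying
`(1/2)δm³ξτ² < Λ² < 2δ⁻¹mξτ²` but not `(1/4)δΛ² ≤ −ξτξφ ≤ ω_Hξφ² + δΛ²` also satisfies
`ξτ k₊ ≥ cΛ² > 0`; in particular `ξτ k₊ ≥ (cδm³/2)ξτ² > 0`. -/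
theorem kerr_trapped_regime_positivity (m δ : ℝ) (hm : 0 < m) (hδ : 0 < δ) :
    ∃ c > (0 : ℝ), ∀ a : ℝ, 0 ≤ a → a < m → ∀ ξτ ξφ Λ : ℝ,
      0 ≤ Λ → ξφ ^ 2 ≤ Λ ^ 2 → 2 * |a * ξτ * ξφ| ≤ Λ ^ 2 →
      (1 / 2 * δ * m ^ 3 * ξτ ^ 2 < Λ ^ 2 ∧ Λ ^ 2 < 2 * δ⁻¹ * m * ξτ ^ 2) →
      ¬(1 / 4 * δ * Λ ^ 2 ≤ -(ξτ * ξφ) ∧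
          -(ξτ * ξφ) ≤ kerrOmegaH m a * ξφ ^ 2 + δ * Λ ^ 2) →
      (c * Λ ^ 2 ≤ ξτ * (ξτ + kerrOmegaH m a * ξφ) ∧ 0 < c * Λ ^ 2 ∧
       c * δ * m ^ 3 / 2 * ξτ ^ 2 ≤ ξτ * (ξτ + kerrOmegaH m a * ξφ) ∧
       0 < c * δ * m ^ 3 / 2 * ξτ ^ 2) := by
  have hcpos : 0 < min (3 * δ / (8 * m)) (δ ^ 2) := lt_min (by positivity) (by positivity)
  refine ⟨min (3 * δ / (8 * m)) (δ ^ 2), hcpos, ?_⟩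
  intro a ha ham ξτ ξφ Λ hΛ hφΛ hadm htrap hnot
  obtain ⟨h1, h2⟩ := htrap
  set c := min (3 * δ / (8 * m)) (δ ^ 2) with hc
  set ω := kerrOmegaH m a with hωdef
  -- basic facts about ω
  have hsq : 0 ≤ Real.sqrt (m ^ 2 - a ^ 2) := Real.sqrt_nonneg _
  have hrp : 0 < kerrRp m a := by
    unfold kerrRp; linarith
  have harp : a ≤ kerrRp m a := by
    unfold kerrRp; linarith
  have hωnn : 0 ≤ ω := by
    rw [hωdef]; unfold kerrOmegaH
    positivity
  have hωle : 2 * m * ω ≤ 1 := by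
    rw [hωdef]; unfold kerrOmegaH
    rw [mul_div_assoc']
    rw [div_le_one (by positivity)]
    nlinarith
  -- δΛ² < 2mξτ²
  have hδinv : δ * δ⁻¹ = 1 := mul_inv_cancel₀ hδ.ne'
  have hδΛ : δ * Λ ^ 2 < 2 * m * ξτ ^ 2 := by
    have h := mul_lt_mul_of_pos_left h2 hδ
    have heq : δ * (2 * δ⁻¹ * m * ξτ ^ 2) = 2 * m * ξτ ^ 2 := by
      field_simp
    linarith
  have hξτ2 : 0 < ξτ ^ 2 := by nlinarith [sq_nonneg Λ, mul_nonneg hδ.le (sq_nonneg Λ)]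
  have hΛ2 : 0 < Λ ^ 2 := by
    have : 0 < 1 / 2 * δ * m ^ 3 * ξτ ^ 2 := by positivity
    linarith
  have main : c * Λ ^ 2 ≤ ξτ * (ξτ + ω * ξφ) := by
    have hc1 : c ≤ 3 * δ / (8 * m) := min_le_left _ _
    have hc2 : c ≤ δ ^ 2 := min_le_right _ _
    rcases lt_or_ge (-(ξτ * ξφ)) (1 / 4 * δ * Λ ^ 2) with hcase | hcase
    · -- case 1: ξτξφ > -(1/4)δΛ²
      have key : -(δ * Λ ^ 2) ≤ 8 * m * (ω * (ξτ * ξφ)) := by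
        rcases le_or_gt 0 (ξτ * ξφ) with h | h
        · have : 0 ≤ 8 * m * (ω * (ξτ * ξφ)) := by positivity
          nlinarith
        · -- ω*(ξτξφ) ≥ (1/(2m))*(ξτξφ)  i.e. 2mω*(ξτξφ) ≥ ξτξφ
          have h1' : (2 * m * ω) * (ξτ * ξφ) ≥ 1 * (ξτ * ξφ) :=
            mul_le_mul_of_nonpos_right hωle h.le
          linarith
      have hcΛ : c * Λ ^ 2 ≤ 3 * δ / (8 * m) * Λ ^ 2 :=
        mul_le_mul_of_nonneg_right hc1 hΛ2.le
      have h38 : 3 * δ / (8 * m) * Λ ^ 2 ≤ ξτ ^ 2 + ω * (ξτ * ξφ) := by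
        rw [div_mul_eq_mul_div, div_le_iff₀ (by positivity)]
        linarith
      linarith
    · -- case 2
      have h3 : ω * ξφ ^ 2 + δ * Λ ^ 2 < -(ξτ * ξφ) :=
        not_le.mp (fun hq => hnot ⟨hcase, hq⟩)
      have hφk : ξφ * (ξτ + ω * ξφ) < -(δ * Λ ^ 2) := by nlinarith [h3]
      have hδΛ2 : 0 < δ * Λ ^ 2 := by positivity
      have hsq2 : (δ * Λ ^ 2) ^ 2 < (ξφ * (ξτ + ω * ξφ)) ^ 2 := by
        nlinarith [mul_pos (show (0:ℝ) < δ * Λ ^ 2 - ξφ * (ξτ + ω * ξφ) by linarith)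
          (show (0:ℝ) < -(δ * Λ ^ 2) - ξφ * (ξτ + ω * ξφ) by linarith)]
      have hΛk : Λ ^ 2 * (ξτ + ω * ξφ) ^ 2 ≥ (ξφ * (ξτ + ω * ξφ)) ^ 2 := by
        have := mul_le_mul_of_nonneg_right hφΛ (sq_nonneg (ξτ + ω * ξφ))
        nlinarith
      have hk2 : δ ^ 2 * Λ ^ 2 < (ξτ + ω * ξφ) ^ 2 := by
        nlinarith [hΛk, hsq2, hΛ2]
      have hωφk : ω * (ξφ * (ξτ + ω * ξφ)) ≤ 0 :=
        mul_nonpos_of_nonneg_of_nonpos hωnn (by nlinarith)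
      have : δ ^ 2 * Λ ^ 2 ≤ ξτ * (ξτ + ω * ξφ) := by nlinarith [hk2, hωφk]
      linarith [mul_le_mul_of_nonneg_right hc2 hΛ2.le]
  have hclΛ : 0 < c * Λ ^ 2 := by positivity
  refine ⟨main, hclΛ, ?_, by positivity⟩
  have : c * (1 / 2 * δ * m ^ 3 * ξτ ^ 2) ≤ c * Λ ^ 2 :=
    mul_le_mul_of_nonneg_left h1.le hcpos.le
  nlinarith
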